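/- Let e : ℝ → ℝ^n be differentiable with e'(t) = A e(t) − r(t) + B v(t), where A ∈ ℝ^{n×n}, B ∈ ℝ^{n×m}, r : ℝ → ℝ^n, v : ℝ → ℝ^m. Let P, Q ∈ ℝ^{n×n} be symmetric positive definite with P A + Aᵀ P = −Q, and set V(t) := e(t)ᵀ P e(t). Then for any ε_R > 0 and ε_v > 0, for all t: V'(t) ≤ −(1 − ε_R − ε_v)·e(t)ᵀ Q e(t) + (1/ε_R)·‖Q^{−1/2} P r(t)‖² + (1/ε_v)·‖Q^{−1/2} P B v(t)‖². -/

import Mathlib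

open Filter Matrix

/-- Euclidean space `ℝ^n`. -/
abbrev E (n : ℕ) := EuclideanSpace ℝ (Fin n)

/-- Smallest eigenvalue of a (Hermitian) real matrix. -/
noncomputable def lamMin {n : ℕ} (M : Matrix (Fin n) (Fin n) ℝ) : ℝ :=
  if h : M.IsHermitian then ⨅ i, h.eigenvalues i else 0

/-- Largest eigenvalue of a (Hermitian) real matrix. -/
noncomputable def lamMax {n : ℕ} (M : Matrix (Fin n) (Fin n) ℝ) : ℝ :=
  if h : M.IsHermitian then ⨆ i, h.eigenvalues i else 0

open scoped Classical in
/-- The positive semidefinite square root `M^{1/2}` of a positive semidefinite matrix. -/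
noncomputable def matSqrt {n : ℕ} (M : Matrix (Fin n) (Fin n) ℝ) : Matrix (Fin n) (Fin n) ℝ :=
  if h : M.PosSemidef then
    h.1.eigenvectorUnitary.1 * diagonal (RCLike.ofReal ∘ Real.sqrt ∘ h.1.eigenvalues) *
      (star h.1.eigenvectorUnitary : Matrix (Fin n) (Fin n) ℝ)
  else 0

/-- `M^{-1/2} := (M^{1/2})⁻¹`. -/
noncomputable def invSqrt {n : ℕ} (M : Matrix (Fin n) (Fin n) ℝ) : Matrix (Fin n) (Fin n) ℝ :=
  (matSqrt M)⁻¹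

/-- Operator norm of a matrix induced by the Euclidean norms. -/
noncomputable def opNorm {m n : ℕ} (M : Matrix (Fin m) (Fin n) ℝ) : ℝ :=
  ‖LinearMap.toContinuousLinearMap (Matrix.toEuclideanLin M)‖

/-- Matrix-vector multiplication as a map between Euclidean spaces. -/
def mv {m n : ℕ} (M : Matrix (Fin m) (Fin n) ℝ) (v : E n) : E m := WithLp.toLp 2 (M.mulVec v)

/-!
Along the trajectory, `V' = 2 eᵀ P ė = -eᵀ Q e - 2 eᵀ P r + 2 eᵀ P B v` by the Lyapunov equation.
Each cross term `eᵀ P w` equals `⟪Q^{1/2} e, Q^{-1/2} P w⟫`, and Young's inequality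
`2 |⟪a, b⟫| ≤ ε ‖a‖² + ‖b‖² / ε` bounds it by `ε eᵀ Q e + ‖Q^{-1/2} P w‖² / ε`.
-/

open scoped InnerProductSpace

lemma two_mul_abs_real_inner_le {F : Type*} [NormedAddCommGroup F] [InnerProductSpace ℝ F]
    {ε : ℝ} (hε : 0 < ε) (a b : F) :
    2 * |inner ℝ a b| ≤ ε * ‖a‖ ^ 2 + 1 / ε * ‖b‖ ^ 2 := by
  have hsq : 0 ≤ (ε * ‖a‖ - ‖b‖) ^ 2 / ε := by positivity
  have hexp : (ε * ‖a‖ - ‖b‖) ^ 2 / ε = ε * ‖a‖ ^ 2 + 1 / ε * ‖b‖ ^ 2 - 2 * (‖a‖ * ‖b‖) := by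
    field_simp
    ring
  linarith [abs_real_inner_le_norm a b]

section QuadraticForm

variable {ι : Type*} [Fintype ι]

lemma dotProduct_mulVec_comm_of_transpose_eq {P : Matrix ι ι ℝ} (hP : Pᵀ = P) (x y : ι → ℝ) :
    x ⬝ᵥ P *ᵥ y = y ⬝ᵥ P *ᵥ x := by
  rw [dotProduct_mulVec, ← mulVec_transpose, hP, dotProduct_comm]

lemma two_mul_dotProduct_mulVec_mulVec_eq_of_lyapunov {P A Q : Matrix ι ι ℝ} (hP : Pᵀ = P)
    (hLyap : P * A + Aᵀ * P = -Q) (x : ι → ℝ) :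
    2 * (x ⬝ᵥ P *ᵥ (A *ᵥ x)) = -(x ⬝ᵥ Q *ᵥ x) := by
  have hsplit : x ⬝ᵥ (P * A + Aᵀ * P) *ᵥ x = 2 * (x ⬝ᵥ P *ᵥ (A *ᵥ x)) := by
    rw [add_mulVec, dotProduct_add, ← mulVec_mulVec, ← mulVec_mulVec, dotProduct_mulVec x Aᵀ,
      vecMul_transpose, dotProduct_mulVec_comm_of_transpose_eq hP (A *ᵥ x)]
    ring
  rw [← hsplit, hLyap, neg_mulVec, dotProduct_neg]

lemma real_inner_eq_dotProduct (x y : EuclideanSpace ℝ ι) : inner ℝ x y = x ⬝ᵥ y := by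
  simp [EuclideanSpace.inner_eq_star_dotProduct, dotProduct_comm]

lemma norm_sq_eq_dotProduct (x : EuclideanSpace ℝ ι) : ‖x‖ ^ 2 = x ⬝ᵥ x := by
  rw [← real_inner_self_eq_norm_sq, real_inner_eq_dotProduct]

variable [DecidableEq ι]

lemma HasDerivAt.dotProduct_mulVec_self {P : Matrix ι ι ℝ} (hP : Pᵀ = P)
    {e : ℝ → EuclideanSpace ℝ ι} {e' : EuclideanSpace ℝ ι} {t : ℝ} (he : HasDerivAt e e' t) :
    HasDerivAt (fun s => e s ⬝ᵥ P *ᵥ e s) (2 * (e t ⬝ᵥ P *ᵥ e')) t := by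
  have hPe : HasDerivAt (fun s => toEuclideanCLM (𝕜 := ℝ) P (e s))
      (toEuclideanCLM (𝕜 := ℝ) P e') t :=
    (toEuclideanCLM (𝕜 := ℝ) P).hasFDerivAt.comp_hasDerivAt t he
  have hfun : (fun s => e s ⬝ᵥ P *ᵥ e s) = fun s => ⟪e s, toEuclideanCLM (𝕜 := ℝ) P (e s)⟫_ℝ := by
    funext s
    simp [real_inner_eq_dotProduct]
  rw [hfun]
  refine (he.inner ℝ hPe).congr_deriv ?_
  simp only [real_inner_eq_dotProduct, ofLp_toEuclideanCLM]
  rw [dotProduct_mulVec_comm_of_transpose_eq hP e'.ofLp]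
  ring

end QuadraticForm

section MatSqrt

variable {n : ℕ}

lemma matSqrt_mul_self {M : Matrix (Fin n) (Fin n) ℝ} (hM : M.PosSemidef) :
    matSqrt M * matSqrt M = M := by
  set U := hM.1.eigenvectorUnitary
  have hUU : (star U : Matrix (Fin n) (Fin n) ℝ) * U = 1 := Unitary.coe_star_mul_self U
  have hspec := hM.1.spectral_theorem
  rw [Unitary.conjStarAlgAut_apply] at hspec
  conv_rhs => rw [hspec]
  rw [matSqrt, dif_pos hM]
  simp only [Matrix.mul_assoc]
  rw [← Matrix.mul_assoc _ (U : Matrix (Fin n) (Fin n) ℝ), hUU, Matrix.one_mul,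
    ← Matrix.mul_assoc (diagonal _), diagonal_mul_diagonal]
  congr 3
  funext i
  simp [Real.mul_self_sqrt (hM.eigenvalues_nonneg i)]

lemma transpose_matSqrt (M : Matrix (Fin n) (Fin n) ℝ) : (matSqrt M)ᵀ = matSqrt M := by
  unfold matSqrt
  split_ifs
  · simp [transpose_mul, Matrix.mul_assoc, Matrix.star_eq_conjTranspose]
  · exact transpose_zero

lemma matSqrt_mul_invSqrt {M : Matrix (Fin n) (Fin n) ℝ} (hM : M.PosDef) :
    matSqrt M * invSqrt M = 1 := by
  have hdet : (matSqrt M).det * (matSqrt M).det = M.det := by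
    rw [← det_mul, matSqrt_mul_self hM.posSemidef]
  refine mul_nonsing_inv _ (isUnit_iff_ne_zero.mpr fun h0 => hM.det_pos.ne' ?_)
  rw [← hdet, h0, zero_mul]

lemma matSqrt_mulVec_dotProduct_self {M : Matrix (Fin n) (Fin n) ℝ} (hM : M.PosSemidef)
    (x : Fin n → ℝ) : matSqrt M *ᵥ x ⬝ᵥ matSqrt M *ᵥ x = x ⬝ᵥ M *ᵥ x := by
  rw [dotProduct_mulVec, ← vecMul_transpose, vecMul_vecMul, transpose_matSqrt,
    matSqrt_mul_self hM, ← dotProduct_mulVec]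

lemma matSqrt_mulVec_dotProduct_invSqrt_mulVec {M : Matrix (Fin n) (Fin n) ℝ} (hM : M.PosDef)
    (x w : Fin n → ℝ) : matSqrt M *ᵥ x ⬝ᵥ invSqrt M *ᵥ w = x ⬝ᵥ w := by
  rw [dotProduct_mulVec, ← vecMul_transpose, vecMul_vecMul, transpose_matSqrt,
    matSqrt_mul_invSqrt hM, vecMul_one]

lemma two_mul_abs_dotProduct_le {Q : Matrix (Fin n) (Fin n) ℝ} (hQ : Q.PosDef) {ε : ℝ}
    (hε : 0 < ε) (x w : E n) :
    2 * |x ⬝ᵥ w| ≤ ε * (x ⬝ᵥ Q *ᵥ x) + 1 / ε * ‖mv (invSqrt Q) w‖ ^ 2 := by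
  have h := two_mul_abs_real_inner_le hε (mv (matSqrt Q) x) (mv (invSqrt Q) w)
  rwa [real_inner_eq_dotProduct, norm_sq_eq_dotProduct (mv (matSqrt Q) x), mv, mv,
    matSqrt_mulVec_dotProduct_invSqrt_mulVec hQ, matSqrt_mulVec_dotProduct_self hQ.posSemidef] at h

end MatSqrt

theorem stmt9 {n m : ℕ}
    (A : Matrix (Fin n) (Fin n) ℝ) (B : Matrix (Fin n) (Fin m) ℝ)
    (r : ℝ → E n) (v : ℝ → E m)
    (e : ℝ → E n)
    (he : ∀ t : ℝ, HasDerivAt e (mv A (e t) - r t + mv B (v t)) t)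
    (P Q : Matrix (Fin n) (Fin n) ℝ) (hP : P.PosDef) (hQ : Q.PosDef)
    (hLyap : P * A + Aᵀ * P = -Q)
    (εR εv : ℝ) (hεR : 0 < εR) (hεv : 0 < εv) :
    ∀ t : ℝ, deriv (fun s => e s ⬝ᵥ P.mulVec (e s)) t ≤
      -(1 - εR - εv) * (e t ⬝ᵥ Q.mulVec (e t)) +
        (1 / εR) * ‖mv (invSqrt Q) (mv P (r t))‖ ^ 2 +
        (1 / εv) * ‖mv (invSqrt Q) (mv P (mv B (v t)))‖ ^ 2 := by
  intro t
  have hPt : Pᵀ = P := (conjTranspose_eq_transpose_of_trivial P).symm.trans hP.isHermitian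
  have hexpand : e t ⬝ᵥ P *ᵥ WithLp.ofLp (mv A (e t) - r t + mv B (v t)) =
      e t ⬝ᵥ P *ᵥ (A *ᵥ e t) - e t ⬝ᵥ mv P (r t) + e t ⬝ᵥ mv P (mv B (v t)) := by
    simp only [mv, WithLp.ofLp_add, WithLp.ofLp_sub, mulVec_add, mulVec_sub, dotProduct_add,
      dotProduct_sub]
  have hdrift := two_mul_dotProduct_mulVec_mulVec_eq_of_lyapunov hPt hLyap (e t)
  have hr := two_mul_abs_dotProduct_le hQ hεR (e t) (mv P (r t))
  have hv := two_mul_abs_dotProduct_le hQ hεv (e t) (mv P (mv B (v t)))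
  rw [((he t).dotProduct_mulVec_self hPt).deriv, hexpand]
  linarith [neg_abs_le (e t ⬝ᵥ mv P (r t)), le_abs_self (e t ⬝ᵥ mv P (mv B (v t)))]
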